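/- arXiv:2207.07344 — 2 statements merged into one kernel-verified Lean document; each statement's English description precedes it below -/
import Mathlib

section
/- If R has only trivial idempotents, then for every positive integer n the ring V_n(R) of upper triangular n×n Toeplitz matrices over R is i-reversible. -/
/-- A ring is *i-reversible* if whenever `a * b` is a non-zero idempotent, `b * a` is an
idempotent. -/
def IsIReversible (S : Type*) [Ring S] : Prop :=
  ∀ a b : S, IsIdempotentElem (a * b) → a * b ≠ 0 → IsIdempotentElem (b * a)

/-- A ring is *reversible* if `a * b = 0` implies `b * a = 0`. -/
def IsReversible (S : Type*) [Ring S] : Prop :=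
  ∀ a b : S, a * b = 0 → b * a = 0

/-- A ring has only trivial idempotents if its only idempotents are `0` and `1`. -/
def HasOnlyTrivialIdempotents (S : Type*) [Ring S] : Prop :=
  ∀ e : S, IsIdempotentElem e → e = 0 ∨ e = 1

/-- Upper triangular predicate for square matrices. -/
def Matrix.IsUpperTri {n : ℕ} {R : Type*} [Zero R] (A : Matrix (Fin n) (Fin n) R) : Prop :=
  ∀ ⦃i j : Fin n⦄, j < i → A i j = 0

lemma Matrix.IsUpperTri.mul {n : ℕ} {R : Type*} [Ring R]
    {A B : Matrix (Fin n) (Fin n) R} (hA : A.IsUpperTri) (hB : B.IsUpperTri) :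
    (A * B).IsUpperTri := by
  intro i j h
  rw [Matrix.mul_apply]
  refine Finset.sum_eq_zero fun k _ => ?_
  rcases lt_or_ge k i with hk | hk
  · rw [hA hk, zero_mul]
  · rw [hB (lt_of_lt_of_le h hk), mul_zero]

/-- The ring `T_n(R)` of upper triangular `n × n` matrices, as a subring of the matrix ring. -/
def triangularRing (n : ℕ) (R : Type*) [Ring R] :
    Subring (Matrix (Fin n) (Fin n) R) where
  carrier := {A | A.IsUpperTri}
  mul_mem' ha hb := ha.mul hb
  one_mem' := fun i j h => by simp [Matrix.one_apply, (ne_of_lt h).symm]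
  add_mem' ha hb := fun i j h => by simp [Matrix.add_apply, ha h, hb h]
  zero_mem' := fun i j h => rfl
  neg_mem' ha := fun i j h => by simp [ha h]

lemma diag_mul_upperTri {n : ℕ} {R : Type*} [Ring R]
    {A B : Matrix (Fin n) (Fin n) R} (hA : A.IsUpperTri)
    (hB : B.IsUpperTri) (i : Fin n) : (A * B) i i = A i i * B i i := by
  rw [Matrix.mul_apply]
  refine Finset.sum_eq_single i (fun k _ hk => ?_) (by simp)
  rcases lt_or_gt_of_ne hk with h | h
  · rw [hA h, zero_mul]
  · rw [hB h, mul_zero]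

/-- The ring `D_n(R)` of upper triangular `n × n` matrices with constant diagonal. -/
def constDiagRing (n : ℕ) (R : Type*) [Ring R] :
    Subring (Matrix (Fin n) (Fin n) R) where
  carrier := {A | A.IsUpperTri ∧ ∀ i j : Fin n, A i i = A j j}
  mul_mem' := by
    rintro A B ⟨hA, hA'⟩ ⟨hB, hB'⟩
    refine ⟨hA.mul hB, fun i j => ?_⟩
    rw [diag_mul_upperTri hA hB, diag_mul_upperTri hA hB, hA' i j, hB' i j]
  one_mem' := ⟨fun i j h => by simp [Matrix.one_apply, (ne_of_lt h).symm], by simp⟩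
  add_mem' := by
    rintro A B ⟨hA, hA'⟩ ⟨hB, hB'⟩
    exact ⟨fun i j h => by simp [Matrix.add_apply, hA h, hB h],
      fun i j => by simp [Matrix.add_apply, hA' i j, hB' i j]⟩
  zero_mem' := ⟨fun i j h => rfl, by simp⟩
  neg_mem' := by
    rintro A ⟨hA, hA'⟩
    exact ⟨fun i j h => by simp [hA h], fun i j => by simp [hA' i j]⟩

/-- The ring `V_n(R)` of upper triangular Toeplitz `n × n` matrices. -/
def toeplitzRing (n : ℕ) (R : Type*) [Ring R] :
    Subring (Matrix (Fin n) (Fin n) R) where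
  carrier := {A | A.IsUpperTri ∧ ∀ (i j : Fin n) (hi : (i : ℕ) + 1 < n) (hj : (j : ℕ) + 1 < n),
    A i j = A ⟨i + 1, hi⟩ ⟨j + 1, hj⟩}
  mul_mem' := by
    rintro A B ⟨hA, hA'⟩ ⟨hB, hB'⟩
    refine ⟨hA.mul hB, ?_⟩
    intro i j hi hj
    have key : ∀ (p q : Fin n), (A * B) p q = ∑ k ∈ Finset.Icc p q, A p k * B k q := by
      intro p q
      rw [Matrix.mul_apply]
      symm
      apply Finset.sum_subset (Finset.subset_univ _)
      intro k _ hk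
      rw [Finset.mem_Icc, not_and_or] at hk
      rcases hk with h | h
      · rw [hA (lt_of_not_ge h), zero_mul]
      · rw [hB (lt_of_not_ge h), mul_zero]
    rw [key, key]
    refine Finset.sum_bij'
      (fun k hk => (⟨(k : ℕ) + 1,
        Nat.lt_of_le_of_lt (Nat.succ_le_succ (Finset.mem_Icc.mp hk).2) hj⟩ : Fin n))
      (fun k hk => (⟨(k : ℕ) - 1, lt_of_le_of_lt (Nat.sub_le _ _) k.isLt⟩ : Fin n))
      ?_ ?_ ?_ ?_ ?_
    · intro k hk
      rw [Finset.mem_Icc] at hk ⊢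
      exact ⟨Nat.succ_le_succ hk.1, Nat.succ_le_succ hk.2⟩
    · intro k hk
      rw [Finset.mem_Icc] at hk ⊢
      have h1 : (i : ℕ) + 1 ≤ (k : ℕ) := hk.1
      have h2 : (k : ℕ) ≤ (j : ℕ) + 1 := hk.2
      constructor
      · exact Fin.mk_le_mk.mpr (Nat.le_sub_of_add_le h1)
      · exact Fin.mk_le_mk.mpr (Nat.sub_le_of_le_add h2)
    · intro k hk
      apply Fin.ext
      simp
    · intro k hk
      apply Fin.ext
      have h1 : 1 ≤ (k : ℕ) :=
        le_trans (Nat.succ_le_succ (Nat.zero_le _)) (Finset.mem_Icc.mp hk).1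
      simp [Nat.sub_add_cancel h1]
    · intro k hk
      rw [hA' i k hi (Nat.lt_of_le_of_lt (Nat.succ_le_succ (Finset.mem_Icc.mp hk).2) hj),
        hB' k j (Nat.lt_of_le_of_lt (Nat.succ_le_succ (Finset.mem_Icc.mp hk).2) hj) hj]
  one_mem' := ⟨fun i j h => by simp [Matrix.one_apply, (ne_of_lt h).symm],
    fun i j hi hj => by simp [Matrix.one_apply, Fin.ext_iff]⟩
  add_mem' := by
    rintro A B ⟨hA, hA'⟩ ⟨hB, hB'⟩
    exact ⟨fun i j h => by simp [Matrix.add_apply, hA h, hB h],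
      fun i j hi hj => by simp [Matrix.add_apply, hA' i j hi hj, hB' i j hi hj]⟩
  zero_mem' := ⟨fun i j h => rfl, fun i j hi hj => rfl⟩
  neg_mem' := by
    rintro A ⟨hA, hA'⟩
    exact ⟨fun i j h => by simp [hA h], fun i j hi hj => by simp [hA' i j hi hj]⟩

/-! An idempotent `E` of `V_n(R)` has constant diagonal `e`, an idempotent of `R`, so `e` is
`0` or `1`. Then `E - e` is strictly upper triangular, hence nilpotent, and an idempotent that
differs from `0` or `1` by a nilpotent is equal to it. So `V_n(R)` has only trivial idempotents,
and a nonzero idempotent `a * b` is `1`, whence `(b * a) * (b * a) = b * (a * b) * a = b * a`. -/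
theorem IsIReversible.of_hasOnlyTrivialIdempotents {S : Type*} [Ring S]
    (h : HasOnlyTrivialIdempotents S) : IsIReversible S := by
  intro a b hab hne
  have hab1 : a * b = 1 := (h _ hab).resolve_left hne
  show b * a * (b * a) = b * a
  rw [mul_assoc, ← mul_assoc a, hab1, one_mul]

theorem HasOnlyTrivialIdempotents.of_injective {S T : Type*} [Ring S] [Ring T]
    (hT : HasOnlyTrivialIdempotents T) {f : S →+* T} (hf : Function.Injective f) :
    HasOnlyTrivialIdempotents S := by
  intro e he
  refine (hT _ (he.map f)).imp (fun h => hf ?_) (fun h => hf ?_) <;> simpa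

namespace Matrix

variable {n : ℕ} {R : Type*}

theorem pow_apply_eq_zero_of_strictUpper [Semiring R] {Z : Matrix (Fin n) (Fin n) R}
    (hZ : ∀ i j : Fin n, (j : ℕ) ≤ i → Z i j = 0) (k : ℕ) (i j : Fin n)
    (hij : (j : ℕ) < i + k) : (Z ^ k) i j = 0 := by
  induction k generalizing j with
  | zero => exact one_apply_ne (Fin.ne_of_gt (Fin.lt_def.2 hij))
  | succ k ih =>
    rw [pow_succ, mul_apply]
    refine Finset.sum_eq_zero fun m _ => ?_
    rcases lt_or_ge (m : ℕ) (i + k) with hm | hm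
    · rw [ih m hm, zero_mul]
    · rw [hZ m j (by omega), mul_zero]

theorem isNilpotent_of_strictUpper [Semiring R] {Z : Matrix (Fin n) (Fin n) R}
    (hZ : ∀ i j : Fin n, (j : ℕ) ≤ i → Z i j = 0) : IsNilpotent Z :=
  ⟨n, by ext i j; exact pow_apply_eq_zero_of_strictUpper hZ n i j (by omega)⟩

theorem isNilpotent_sub_scalar_of_mem_constDiagRing [Ring R] {A : Matrix (Fin n) (Fin n) R}
    (hA : A ∈ constDiagRing n R) (i : Fin n) : IsNilpotent (A - scalar (Fin n) (A i i)) := by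
  refine isNilpotent_of_strictUpper fun j k hkj => ?_
  rcases (Fin.le_iff_val_le_val.2 hkj).lt_or_eq with hlt | rfl
  · simp [hA.1 hlt, diagonal_apply_ne _ hlt.ne']
  · simp [hA.2 k i]

theorem diag_eq_of_mem_toeplitzRing [Ring R] {A : Matrix (Fin n) (Fin n) R}
    (hA : A ∈ toeplitzRing n R) (k : ℕ) (hk : k < n) :
    A ⟨k, hk⟩ ⟨k, hk⟩ = A ⟨0, by omega⟩ ⟨0, by omega⟩ := by
  induction k with
  | zero => rfl
  | succ k ih => rw [← ih (by omega), hA.2 ⟨k, by omega⟩ ⟨k, by omega⟩ hk hk]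

end Matrix

theorem toeplitzRing_le_constDiagRing (n : ℕ) (R : Type*) [Ring R] :
    toeplitzRing n R ≤ constDiagRing n R := fun A hA =>
  ⟨hA.1, fun i j => (A.diag_eq_of_mem_toeplitzRing hA i i.2).trans
    (A.diag_eq_of_mem_toeplitzRing hA j j.2).symm⟩

theorem constDiagRing_hasOnlyTrivialIdempotents {R : Type*} [Ring R]
    (hR : HasOnlyTrivialIdempotents R) (n : ℕ) : HasOnlyTrivialIdempotents (constDiagRing n R) := by
  intro E hE
  rcases isEmpty_or_nonempty (Fin n) with _ | ⟨⟨i⟩⟩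
  · exact Or.inl (Subsingleton.elim _ _)
  have hEm : IsIdempotentElem (E : Matrix (Fin n) (Fin n) R) := hE.map (constDiagRing n R).subtype
  have hdiag : IsIdempotentElem ((E : Matrix (Fin n) (Fin n) R) i i) := by
    rw [IsIdempotentElem, ← diag_mul_upperTri E.2.1 E.2.1, hEm.eq]
  have hnil := Matrix.isNilpotent_sub_scalar_of_mem_constDiagRing E.2 i
  refine (hR _ hdiag).imp (fun h0 => Subtype.ext ?_) (fun h1 => Subtype.ext ?_)
  · rw [h0, map_zero] at hnil
    exact eq_of_isNilpotent_sub_of_isIdempotentElem_of_commute hEm .zero hnil (.zero_right _)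
  · rw [h1, map_one] at hnil
    exact eq_of_isNilpotent_sub_of_isIdempotentElem_of_commute hEm .one hnil (.one_right _)

theorem toeplitzRing_isIReversible_general (R : Type*) [Ring R] (h : HasOnlyTrivialIdempotents R)
    (n : ℕ) : IsIReversible (toeplitzRing n R) :=
  .of_hasOnlyTrivialIdempotents <| (constDiagRing_hasOnlyTrivialIdempotents h n).of_injective
    (Subring.inclusion_injective (toeplitzRing_le_constDiagRing n R))

/-- If `R` has only trivial idempotents, then for every positive integer `n` the ring
`V_n(R)` of upper triangular Toeplitz matrices is i-reversible. -/
theorem toeplitzRing_isIReversible (R : Type*) [Ring R] (h : HasOnlyTrivialIdempotents R)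
    (n : ℕ) (hn : 0 < n) : IsIReversible (toeplitzRing n R) :=
  toeplitzRing_isIReversible_general R h n
end

section
/- Let R be an abelian ring that is not reversible. Then the trivial extension T(R,R) is i-reversible if and only if R has only trivial idempotents. -/
theorem IsIdempotentElem.of_map_injective {M N F : Type*} [Mul M] [Mul N] [FunLike F M N]
    [MulHomClass F M N] {f : F} (hf : Function.Injective f) {e : M}
    (he : IsIdempotentElem (f e)) : IsIdempotentElem e :=
  hf <| by rw [map_mul]; exact he

namespace IsIReversible

variable {S : Type*} [Ring S]

theorem of_injective {T : Type*} [Ring T] {f : S →+* T} (hf : Function.Injective f)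
    (hT : IsIReversible T) : IsIReversible S := fun a b hab hab0 =>
  .of_map_injective hf <| by
    have := hT (f a) (f b) (by rw [← map_mul]; exact hab.map f)
      (by rw [← map_mul]; exact (map_ne_zero_iff f hf).mpr hab0)
    rwa [← map_mul] at this

theorem mul_mul_one_sub_eq_zero (hS : IsIReversible S) {e : S} (he : IsIdempotentElem e)
    (he_comm : ∀ r, Commute e r) (he0 : e ≠ 0) {x y : S} (hxy : x * y = 0) :
    y * x * (1 - e) = 0 := by
  set g := 1 - e
  have hg : IsIdempotentElem g := he.one_sub
  have hg_comm : ∀ r, Commute g r := fun r => (Commute.one_left r).sub_left (he_comm r)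
  have heg : e * g = 0 := he.mul_one_sub_self
  have hge : g * e = 0 := he.one_sub_mul_self
  have hpq : (e + x * g) * (e + y * g) = e := by
    have h1 : e * (y * g) = 0 := by rw [← mul_assoc, (he_comm y).eq, mul_assoc, heg, mul_zero]
    have h2 : x * g * e = 0 := by rw [mul_assoc, hge, mul_zero]
    have h3 : x * g * (y * g) = 0 := by
      rw [mul_assoc, ← mul_assoc g, (hg_comm y).eq, mul_assoc y, ← mul_assoc x, hxy, zero_mul]
    rw [add_mul, mul_add, mul_add, he.eq, h1, h2, h3, add_zero, add_zero, add_zero]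
  have hqp : (e + y * g) * (e + x * g) = e + y * x * g := by
    have h1 : e * (x * g) = 0 := by rw [← mul_assoc, (he_comm x).eq, mul_assoc, heg, mul_zero]
    have h2 : y * g * e = 0 := by rw [mul_assoc, hge, mul_zero]
    have h3 : y * g * (x * g) = y * x * g := by
      rw [mul_assoc, ← mul_assoc g, (hg_comm x).eq, mul_assoc x, hg.eq, ← mul_assoc]
    rw [add_mul, mul_add, mul_add, he.eq, h1, h2, h3, add_zero, zero_add]
  have hc : IsIdempotentElem (e + y * x * g) :=
    hqp ▸ hS _ _ (by rw [hpq]; exact he) (by rw [hpq]; exact he0)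
  set c := y * x * g
  have hec : e * c = 0 := by rw [(he_comm c).eq, mul_assoc, hge, mul_zero]
  have hce : c * e = 0 := by rw [mul_assoc, hge, mul_zero]
  have hc_eq : c = y * g * x := by simp only [c, mul_assoc, (hg_comm x).eq]
  have hxc : x * c = 0 := by simp only [c, ← mul_assoc, hxy, zero_mul]
  have hcc : c * c = 0 := calc
    c * c = y * g * x * c := by rw [← hc_eq]
    _ = 0 := by rw [mul_assoc, hxc, mul_zero]
  have := hc.eq
  rw [add_mul, mul_add, mul_add, he.eq, hec, hce, hcc, add_zero, add_zero, add_zero] at this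
  simpa using this.symm

theorem isReversible_of_isIdempotentElem (hS : IsIReversible S) {e : S}
    (he : IsIdempotentElem e) (he_comm : ∀ r, Commute e r) (he0 : e ≠ 0) (he1 : e ≠ 1) :
    IsReversible S := fun x y hxy => by
  have h1 := hS.mul_mul_one_sub_eq_zero he he_comm he0 hxy
  have h2 := hS.mul_mul_one_sub_eq_zero he.one_sub
    (fun r => (Commute.one_left r).sub_left (he_comm r)) (sub_ne_zero.mpr he1.symm) hxy
  rw [sub_sub_cancel] at h2
  calc y * x = y * x * (1 - e) + y * x * e := by rw [← mul_add, sub_add_cancel, mul_one]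
    _ = 0 := by rw [h1, h2, add_zero]

end IsIReversible

theorem HasOnlyTrivialIdempotents.isIReversible {S : Type*} [Ring S]
    (hS : HasOnlyTrivialIdempotents S) : IsIReversible S := fun a b hab hab0 => by
  have hab1 : a * b = 1 := (hS _ hab).resolve_left hab0
  show b * a * (b * a) = b * a
  rw [mul_assoc, ← mul_assoc a, hab1, one_mul]

open TrivSqZeroExt in
theorem HasOnlyTrivialIdempotents.trivSqZeroExt {R M : Type*} [Ring R] [AddCommGroup M]
    [Module R M] [Module Rᵐᵒᵖ M] [SMulCommClass R Rᵐᵒᵖ M]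
    (hR : HasOnlyTrivialIdempotents R) : HasOnlyTrivialIdempotents (TrivSqZeroExt R M) := by
  intro x hx
  have hfst : IsIdempotentElem x.fst := congrArg fst hx.eq
  have hsnd : x.fst • x.snd + MulOpposite.op x.fst • x.snd = x.snd := congrArg snd hx.eq
  rcases hR _ hfst with h0 | h1
  · left
    ext
    · exact h0
    · simpa [h0] using hsnd.symm
  · right
    ext
    · exact h1
    · simpa [h1] using hsnd

/-- For an abelian ring `R` that is not reversible, the trivial extension `T(R,R)` is
i-reversible if and only if `R` has only trivial idempotents. -/
theorem trivSqZeroExt_isIReversible_iff (R : Type*) [Ring R]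
    (habelian : ∀ e : R, IsIdempotentElem e → ∀ r : R, e * r = r * e)
    (hnotrev : ¬ IsReversible R) :
    IsIReversible (TrivSqZeroExt R R) ↔ HasOnlyTrivialIdempotents R := by
  refine ⟨fun hT e he => ?_, fun hR => hR.trivSqZeroExt.isIReversible⟩
  have hR : IsIReversible R :=
    hT.of_injective (f := TrivSqZeroExt.inlHom R R) TrivSqZeroExt.inl_injective
  by_contra! he_triv
  exact hnotrev (hR.isReversible_of_isIdempotentElem he (habelian e he) he_triv.1 he_triv.2)
end
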